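/- arXiv:1803.06578 — 3 statements merged into one kernel-verified Lean document; each statement's English description precedes it below -/
import Mathlib

section
/- In the structural model η = α + Σ_{j=1}^l B_j φ_j(ξ) + Σ_{k=1}^r Γ_k Z_k + ζ, with each φ_j(ξ) and each Z_k square-integrable, ζ square-integrable, independent of (ξ, X, Z), with mean 0 and variance Ψ, and with φ*_j := E[φ_j(ξ) | σ(X,Z)], the residual variance of the step-two linear model (replacing the latent terms by their conditional-mean predictions) satisfies Var(η − Σ_{j=1}^l B_j φ*_j − Σ_{k=1}^r Γ_k Z_k) = Ψ + Var(Σ_{j=1}^l B_j (φ_j(ξ) − φ*_j)); i.e., the limiting residual variance exceeds the true residual variance Ψ by exactly the variance of the prediction error of the non-linear latent terms. -/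
open MeasureTheory ProbabilityTheory

/-- The covariance of two real random variables. -/
noncomputable def covar {Ω : Type*} {mΩ : MeasurableSpace Ω} (P : Measure Ω) (f g : Ω → ℝ) : ℝ :=
  ∫ ω, (f ω - ∫ x, f x ∂P) * (g ω - ∫ x, g x ∂P) ∂P

/-- The variance of a real random variable. -/
noncomputable def var {Ω : Type*} {mΩ : MeasurableSpace Ω} (P : Measure Ω) (f : Ω → ℝ) : ℝ :=
  covar P f f

/-!
The residual equals `α + U + ζ`, where `U = Σ_j B_j (φ_j(ξ) - φ*_j)` is the prediction error:
the terms `Γ_k Z_k` cancel. Since `φ*_j` is `σ(X, Z)`-measurable, `U` is a function of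
`(ξ, X, Z)`, hence independent of `ζ`, and the variances of `U` and `ζ` add.
-/

section Variance

variable {Ω : Type*} {mΩ : MeasurableSpace Ω} {P : Measure Ω} {f g : Ω → ℝ}

lemma var_eq_variance (hf : AEMeasurable f P) : var P f = variance f P := by
  rw [variance_eq_integral hf]
  simp only [var, covar, sq]

lemma var_const_add [IsProbabilityMeasure P] (hf : AEMeasurable f P) (c : ℝ) :
    var P (fun ω => c + f ω) = var P f := by
  rw [var_eq_variance (hf.const_add c), var_eq_variance hf,
    variance_const_add hf.aestronglyMeasurable]

lemma ProbabilityTheory.IndepFun.var_add (hf : MemLp f 2 P) (hg : MemLp g 2 P)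
    (hfg : IndepFun f g P) : var P (f + g) = var P f + var P g := by
  rw [var_eq_variance (hf.add hg).aemeasurable, var_eq_variance hf.aemeasurable,
    var_eq_variance hg.aemeasurable, hfg.variance_add hf hg]

end Variance

lemma ProbabilityTheory.IndepFun.of_measurable_comap_left {Ω β γ δ : Type*}
    {mΩ : MeasurableSpace Ω} {P : Measure Ω} [mβ : MeasurableSpace β] [MeasurableSpace γ]
    [MeasurableSpace δ]
    {W : Ω → β} {V : Ω → γ} {U : Ω → δ} (hWV : IndepFun W V P)
    (hU : Measurable[mβ.comap W] U) : IndepFun U V P := by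
  rw [IndepFun_iff_Indep] at hWV ⊢
  exact indep_of_indep_of_le_left hWV hU.comap_le

theorem var_steptwo_residual_general {Ω : Type*} {ℱ : MeasurableSpace Ω} (P : Measure Ω)
    [IsProbabilityMeasure P] {h r q l : ℕ}
    (X : Ω → Fin h → ℝ) (Z : Ω → Fin r → ℝ) (ξ : Ω → Fin q → ℝ)
    (φ : Fin l → (Fin q → ℝ) → ℝ) (hφ : ∀ j, Measurable (φ j))
    (α : ℝ) (B : Fin l → ℝ) (Γ : Fin r → ℝ) (ζ : Ω → ℝ) (Ψ : ℝ)
    (𝒢 : MeasurableSpace Ω)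
    (h𝒢 : 𝒢 = MeasurableSpace.comap (fun ω => (X ω, Z ω)) inferInstance)
    (hφL2 : ∀ j, MemLp (fun ω => φ j (ξ ω)) 2 P)
    (hζL2 : MemLp ζ 2 P)
    (hζindep : IndepFun ζ (fun ω => (ξ ω, X ω, Z ω)) P)
    (hζvar : var P ζ = Ψ)
    (φs : Fin l → Ω → ℝ)
    (hφs : ∀ j, φs j = P[fun ω => φ j (ξ ω)|𝒢])
    (η : Ω → ℝ)
    (hη : η = fun ω => α + (∑ j, B j * φ j (ξ ω)) + (∑ k, Γ k * Z ω k) + ζ ω) :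
    var P (fun ω => η ω - (∑ j, B j * φs j ω) - ∑ k, Γ k * Z ω k) =
      Ψ + var P (fun ω => ∑ j, B j * (φ j (ξ ω) - φs j ω)) := by
  set W : Ω → (Fin q → ℝ) × (Fin h → ℝ) × (Fin r → ℝ) := fun ω => (ξ ω, X ω, Z ω)
  set U : Ω → ℝ := fun ω => ∑ j, B j * (φ j (ξ ω) - φs j ω)
  have hUL2 : MemLp U 2 P := memLp_finsetSum _ fun j _ =>
    ((hφL2 j).sub (hφs j ▸ (hφL2 j).condExp one_le_two)).const_mul (B j)
  have hW : Measurable[MeasurableSpace.comap W inferInstance] W := comap_measurable W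
  have h𝒢W : 𝒢 ≤ MeasurableSpace.comap W inferInstance := by
    rw [h𝒢]
    exact (measurable_snd.comp hW).comap_le
  have hUW : Measurable[MeasurableSpace.comap W inferInstance] U :=
    Finset.measurable_sum _ fun j _ => measurable_const.mul <|
      ((hφ j).comp (measurable_fst.comp hW)).sub <|
        hφs j ▸ stronglyMeasurable_condExp.measurable.mono h𝒢W le_rfl
  have hresidual : (fun ω => η ω - (∑ j, B j * φs j ω) - ∑ k, Γ k * Z ω k)
      = fun ω => α + (U + ζ) ω := by
    funext ω
    simp only [hη, U, Pi.add_apply, mul_sub, Finset.sum_sub_distrib]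
    ring
  have hUζ : IndepFun U ζ P := hζindep.symm.of_measurable_comap_left hUW
  rw [hresidual, var_const_add (hUL2.add hζL2).aemeasurable, hUζ.var_add hUL2 hζL2, hζvar,
    add_comm]

/-- In the structural model `η = α + Σ_j B_j φ_j(ξ) + Σ_k Γ_k Z_k + ζ`, with
`ζ` independent of `(ξ, X, Z)`, mean 0 and variance `Ψ`, and `φ*_j = E[φ_j(ξ) | σ(X,Z)]`,
the residual variance of the step-two linear model satisfies
`Var(η − Σ_j B_j φ*_j − Σ_k Γ_k Z_k) = Ψ + Var(Σ_j B_j (φ_j(ξ) − φ*_j))`. -/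
theorem var_steptwo_residual {Ω : Type*} {ℱ : MeasurableSpace Ω} (P : Measure Ω)
    [IsProbabilityMeasure P] {h r q l : ℕ}
    (X : Ω → Fin h → ℝ) (Z : Ω → Fin r → ℝ) (ξ : Ω → Fin q → ℝ)
    (hX : Measurable X) (hZ : Measurable Z) (hξ : Measurable ξ)
    (φ : Fin l → (Fin q → ℝ) → ℝ) (hφ : ∀ j, Measurable (φ j))
    (α : ℝ) (B : Fin l → ℝ) (Γ : Fin r → ℝ) (ζ : Ω → ℝ) (Ψ : ℝ)
    (𝒢 : MeasurableSpace Ω)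
    (h𝒢 : 𝒢 = MeasurableSpace.comap (fun ω => (X ω, Z ω)) inferInstance)
    (hφL2 : ∀ j, MemLp (fun ω => φ j (ξ ω)) 2 P)
    (hZL2 : ∀ k, MemLp (fun ω => Z ω k) 2 P)
    (hζL2 : MemLp ζ 2 P)
    (hζindep : IndepFun ζ (fun ω => (ξ ω, X ω, Z ω)) P)
    (hζmean : ∫ ω, ζ ω ∂P = 0)
    (hζvar : var P ζ = Ψ)
    (φs : Fin l → Ω → ℝ)
    (hφs : ∀ j, φs j = P[fun ω => φ j (ξ ω)|𝒢])
    (η : Ω → ℝ)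
    (hη : η = fun ω => α + (∑ j, B j * φ j (ξ ω)) + (∑ k, Γ k * Z ω k) + ζ ω) :
    var P (fun ω => η ω - (∑ j, B j * φs j ω) - ∑ k, Γ k * Z ω k) =
      Ψ + var P (fun ω => ∑ j, B j * (φ j (ξ ω) - φs j ω)) :=
  var_steptwo_residual_general (ℱ := ℱ) P X Z ξ φ hφ α B Γ ζ Ψ 𝒢 h𝒢 hφL2 hζL2 hζindep hζvar φs hφs η
    hη
end

section
/- In the structural model η = α + Σ_{j=1}^l B_j φ_j(ξ) + Σ_{k=1}^r Γ_k Z_k + ζ, with each φ_j(ξ) and each Z_k square-integrable, ζ square-integrable, independent of (ξ, X, Z), with mean 0, and with φ*_j := E[φ_j(ξ) | σ(X,Z)], the covariance between each predicted term and the latent outcome satisfies, for every j: Cov(φ*_j, η) = Σ_{j'=1}^l B_{j'} Cov(φ*_j, φ*_{j'}) + Σ_{k=1}^r Γ_k Cov(φ*_j, Z_k). -/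
/-!
Covariance is bilinear on `L²`, so `Cov(φ*_j, η)` splits along the terms of `η`. The constant `α`
drops out, and `ζ` contributes nothing because it is independent of `(X, Z)`, hence of the
`σ(X, Z)`-measurable `φ*_j`. Finally, by the pull-out property of conditional expectation,
`Cov(W, Y) = Cov(W, E[Y | 𝒢])` for every `𝒢`-measurable `W ∈ L²`, which turns
`Cov(φ*_j, φ_{j'}(ξ))` into `Cov(φ*_j, φ*_{j'})`.
-/

open MeasureTheory ProbabilityTheory

lemma covar_eq_covariance {Ω : Type*} {mΩ : MeasurableSpace Ω} (P : Measure Ω) (f g : Ω → ℝ) :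
    covar P f g = cov[f, g; P] :=
  rfl

namespace ProbabilityTheory

variable {Ω : Type*} {m mΩ : MeasurableSpace Ω} {μ : Measure Ω}

lemma IndepFun.of_measurable_comap_right {β γ δ : Type*} [mβ : MeasurableSpace β]
    [mγ : MeasurableSpace γ] [MeasurableSpace δ] {f : Ω → β} {g : Ω → γ} {h : Ω → δ}
    (hfg : IndepFun f g μ) (hh : Measurable[mγ.comap g] h) : IndepFun f h μ :=
  (IndepFun_iff_Indep f h μ).2 <|
    indep_of_indep_of_le_right ((IndepFun_iff_Indep f g μ).1 hfg) hh.comap_le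

lemma covariance_fun_add_right [IsFiniteMeasure μ] {X Y Z : Ω → ℝ}
    (hX : MemLp X 2 μ) (hY : MemLp Y 2 μ) (hZ : MemLp Z 2 μ) :
    cov[X, fun ω ↦ Y ω + Z ω; μ] = cov[X, Y; μ] + cov[X, Z; μ] :=
  covariance_add_right hX hY hZ

lemma covariance_fun_sum_const_mul_right [IsFiniteMeasure μ] {ι : Type*} [Fintype ι]
    {X : Ω → ℝ} {Y : ι → Ω → ℝ} (c : ι → ℝ) (hX : MemLp X 2 μ) (hY : ∀ i, MemLp (Y i) 2 μ) :
    cov[X, fun ω ↦ ∑ i, c i * Y i ω; μ] = ∑ i, c i * cov[X, Y i; μ] := by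
  rw [covariance_fun_sum_right (X := fun i ω ↦ c i * Y i ω) (fun i ↦ (hY i).const_mul _) hX]
  simp_rw [covariance_const_mul_right]

lemma covariance_condExp_right [IsProbabilityMeasure μ] (hm : m ≤ mΩ) {W Y : Ω → ℝ}
    (hW : StronglyMeasurable[m] W) (hWL2 : MemLp W 2 μ) (hY : MemLp Y 2 μ) :
    cov[W, μ[Y|m]; μ] = cov[W, Y; μ] := by
  rw [covariance_eq_sub hWL2 (hY.condExp one_le_two), covariance_eq_sub hWL2 hY,
    integral_condExp hm]
  have hpull : μ[W * Y|m] =ᵐ[μ] W * μ[Y|m] :=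
    condExp_mul_of_stronglyMeasurable_left hW (hWL2.integrable_mul hY) (hY.integrable one_le_two)
  rw [← integral_congr_ae hpull, integral_condExp hm]

end ProbabilityTheory

theorem covar_prediction_outcome_general {Ω : Type*} {ℱ : MeasurableSpace Ω} (P : Measure Ω)
    [IsProbabilityMeasure P] {h r q l : ℕ}
    (X : Ω → Fin h → ℝ) (Z : Ω → Fin r → ℝ) (ξ : Ω → Fin q → ℝ)
    (hX : Measurable X) (hZ : Measurable Z)
    (φ : Fin l → (Fin q → ℝ) → ℝ)
    (α : ℝ) (B : Fin l → ℝ) (Γ : Fin r → ℝ) (ζ : Ω → ℝ)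
    (𝒢 : MeasurableSpace Ω)
    (h𝒢 : 𝒢 = MeasurableSpace.comap (fun ω => (X ω, Z ω)) inferInstance)
    (hφL2 : ∀ j, MemLp (fun ω => φ j (ξ ω)) 2 P)
    (hZL2 : ∀ k, MemLp (fun ω => Z ω k) 2 P)
    (hζL2 : MemLp ζ 2 P)
    (hζindep : IndepFun ζ (fun ω => (ξ ω, X ω, Z ω)) P)
    (φs : Fin l → Ω → ℝ)
    (hφs : ∀ j, φs j = P[fun ω => φ j (ξ ω)|𝒢])
    (η : Ω → ℝ)
    (hη : η = fun ω => α + (∑ j, B j * φ j (ξ ω)) + (∑ k, Γ k * Z ω k) + ζ ω) :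
    ∀ j, covar P (φs j) η =
      (∑ j', B j' * covar P (φs j) (φs j')) +
        ∑ k, Γ k * covar P (φs j) (fun ω => Z ω k) := by
  intro j
  have hm : 𝒢 ≤ ℱ := h𝒢 ▸ (hX.prodMk hZ).comap_le
  have hφsL2 : ∀ j', MemLp (φs j') 2 P := fun j' ↦ hφs j' ▸ (hφL2 j').condExp one_le_two
  have hφs_meas : StronglyMeasurable[𝒢] (φs j) := hφs j ▸ stronglyMeasurable_condExp
  have hφs_indep : IndepFun (φs j) ζ P :=
    ((hζindep.comp measurable_id measurable_snd).of_measurable_comap_right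
      (h𝒢 ▸ hφs_meas.measurable)).symm
  have hpredict : ∀ j', cov[φs j, φs j'; P] = cov[φs j, fun ω ↦ φ j' (ξ ω); P] := fun j' ↦ by
    rw [hφs j', covariance_condExp_right hm hφs_meas (hφsL2 j) (hφL2 j')]
  have hφsumL2 : MemLp (fun ω ↦ ∑ j', B j' * φ j' (ξ ω)) 2 P :=
    memLp_finsetSum _ fun j' _ ↦ (hφL2 j').const_mul _
  have hZsumL2 : MemLp (fun ω ↦ ∑ k, Γ k * Z ω k) 2 P :=
    memLp_finsetSum _ fun k _ ↦ (hZL2 k).const_mul _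
  have hαφL2 : MemLp (fun ω ↦ α + ∑ j', B j' * φ j' (ξ ω)) 2 P := (memLp_const α).add hφsumL2
  have hαφZL2 : MemLp (fun ω ↦ α + ∑ j', B j' * φ j' (ξ ω) + ∑ k, Γ k * Z ω k) 2 P :=
    hαφL2.add hZsumL2
  simp only [covar_eq_covariance, hpredict]
  rw [hη, covariance_fun_add_right (hφsL2 j) hαφZL2 hζL2,
    hφs_indep.covariance_eq_zero (hφsL2 j) hζL2, add_zero,
    covariance_fun_add_right (hφsL2 j) hαφL2 hZsumL2,
    covariance_const_add_right (hφsumL2.integrable one_le_two),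
    covariance_fun_sum_const_mul_right B (hφsL2 j) hφL2,
    covariance_fun_sum_const_mul_right Γ (hφsL2 j) hZL2]

/-- In the structural model `η = α + Σ_j B_j φ_j(ξ) + Σ_k Γ_k Z_k + ζ`, with
`ζ` independent of `(ξ, X, Z)` and mean 0, and `φ*_j = E[φ_j(ξ) | σ(X,Z)]`, for every `j`:
`Cov(φ*_j, η) = Σ_{j'} B_{j'} Cov(φ*_j, φ*_{j'}) + Σ_k Γ_k Cov(φ*_j, Z_k)`. -/
theorem covar_prediction_outcome {Ω : Type*} {ℱ : MeasurableSpace Ω} (P : Measure Ω)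
    [IsProbabilityMeasure P] {h r q l : ℕ}
    (X : Ω → Fin h → ℝ) (Z : Ω → Fin r → ℝ) (ξ : Ω → Fin q → ℝ)
    (hX : Measurable X) (hZ : Measurable Z) (hξ : Measurable ξ)
    (φ : Fin l → (Fin q → ℝ) → ℝ) (hφ : ∀ j, Measurable (φ j))
    (α : ℝ) (B : Fin l → ℝ) (Γ : Fin r → ℝ) (ζ : Ω → ℝ)
    (𝒢 : MeasurableSpace Ω)
    (h𝒢 : 𝒢 = MeasurableSpace.comap (fun ω => (X ω, Z ω)) inferInstance)
    (hφL2 : ∀ j, MemLp (fun ω => φ j (ξ ω)) 2 P)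
    (hZL2 : ∀ k, MemLp (fun ω => Z ω k) 2 P)
    (hζL2 : MemLp ζ 2 P)
    (hζindep : IndepFun ζ (fun ω => (ξ ω, X ω, Z ω)) P)
    (hζmean : ∫ ω, ζ ω ∂P = 0)
    (φs : Fin l → Ω → ℝ)
    (hφs : ∀ j, φs j = P[fun ω => φ j (ξ ω)|𝒢])
    (η : Ω → ℝ)
    (hη : η = fun ω => α + (∑ j, B j * φ j (ξ ω)) + (∑ k, Γ k * Z ω k) + ζ ω) :
    ∀ j, covar P (φs j) η =
      (∑ j', B j' * covar P (φs j) (φs j')) +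
        ∑ k, Γ k * covar P (φs j) (fun ω => Z ω k) :=
  covar_prediction_outcome_general (ℱ := ℱ) P X Z ξ hX hZ φ α B Γ ζ 𝒢 h𝒢 hφL2 hZL2 hζL2 hζindep φs
    hφs η hη
end

section
/- Let (ξ, X) be a jointly multivariate Gaussian random vector on ℝ^q × ℝ^h with mean (μ_ξ, μ_X) and positive definite covariance matrix Σ with blocks Σ_ξ, Σ_{ξX}, Σ_{Xξ}, Σ_X. Then for each coordinate a = 1,…,q, the conditional expectation of ξ_a given σ(X) equals, almost surely, the a-th coordinate of the affine function μ_ξ + Σ_{ξX} Σ_X^{-1} (X − μ_X); that is, E[ξ_a | σ(X)] = μ_{ξ,a} + (Σ_{ξX} Σ_X^{-1} (X − μ_X))_a almost surely. -/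
/-!
Write `c(x) = μ_ξ + Σ_{ξX} Σ_X⁻¹ (x − μ_X)` and `S = Σ_ξ − Σ_{ξX} Σ_X⁻¹ Σ_{Xξ}`. Completing the
square in the first block of `Σ⁻¹` factors the joint density of `(ξ, X)` at `(y, x)` as a
function of `x` alone times `exp(−½ (y − c(x))ᵀ S⁻¹ (y − c(x)))`. Hence, for fixed `x`, the
integral of `(y_a − c(x)_a) ψ(x)` against the density in `y` vanishes by the symmetry
`y − c(x) ↦ c(x) − y`, and Fubini gives `E[(ξ_a − c(X)_a) ψ(X)] = 0` for every bounded
measurable `ψ`. Taking `ψ` an indicator characterises `c(X)_a` as `E[ξ_a | σ(X)]`; the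
integrability this needs comes from the Gaussian decay `xᵀ Σ⁻¹ x ≥ λ ‖x‖²` with `λ > 0`.
-/

open MeasureTheory ProbabilityTheory Matrix

/-- The multivariate Gaussian measure on `ι → ℝ` with mean vector `μ` and (positive
definite) covariance matrix `S`, defined by its Lebesgue density
`x ↦ ((2π)^card ι · det S)^(-1/2) · exp(−½ ⟨x−μ, S⁻¹ (x−μ)⟩)`. -/
noncomputable def multivariateGaussian {ι : Type*} [Fintype ι] [DecidableEq ι]
    (μ : ι → ℝ) (S : Matrix ι ι ℝ) : Measure (ι → ℝ) :=
  volume.withDensity fun x =>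
    ENNReal.ofReal (Real.sqrt (((2 * Real.pi) ^ Fintype.card ι * S.det)⁻¹) *
      Real.exp (-(1 / 2) * dotProduct (x - μ) (S⁻¹ *ᵥ (x - μ))))

open Real

theorem Matrix.PosDef.toBlocks₂₂ {m n : Type*} {M : Matrix (m ⊕ n) (m ⊕ n) ℝ} (hM : M.PosDef) :
    M.toBlocks₂₂.PosDef :=
  hM.submatrix Sum.inr_injective

section BlockMatrix

variable {m n : Type*} [Fintype m] [Fintype n] [DecidableEq m] [DecidableEq n]
  {A : Matrix m m ℝ} {B : Matrix m n ℝ} {D : Matrix n n ℝ}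

theorem isUnit_det_schur_of_isUnit_det_fromBlocks (hM : IsUnit (fromBlocks A B Bᵀ D).det)
    (hD : IsUnit D.det) : IsUnit (A - B * D⁻¹ * Bᵀ).det := by
  have := invertibleOfIsUnitDet D hD
  rw [det_fromBlocks₂₂, invOf_eq_nonsing_inv] at hM
  exact isUnit_of_mul_isUnit_right hM

theorem sumElim_dotProduct_inv_fromBlocks_mulVec (hM : IsUnit (fromBlocks A B Bᵀ D).det)
    (hD : IsUnit D.det) (hDs : Dᵀ = D) (u : m → ℝ) (v : n → ℝ) :
    Sum.elim u v ⬝ᵥ (fromBlocks A B Bᵀ D)⁻¹ *ᵥ Sum.elim u v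
      = (u - (B * D⁻¹) *ᵥ v) ⬝ᵥ (A - B * D⁻¹ * Bᵀ)⁻¹ *ᵥ (u - (B * D⁻¹) *ᵥ v)
        + v ⬝ᵥ D⁻¹ *ᵥ v := by
  set S := A - B * D⁻¹ * Bᵀ
  set r := u - (B * D⁻¹) *ᵥ v
  have hS := isUnit_det_schur_of_isUnit_det_fromBlocks hM hD
  have := invertibleOfIsUnitDet _ hM
  have hDt : (B * D⁻¹)ᵀ = D⁻¹ * Bᵀ := by
    rw [transpose_mul, transpose_nonsing_inv, hDs]
  have hsol : (fromBlocks A B Bᵀ D)⁻¹ *ᵥ Sum.elim u v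
      = Sum.elim (S⁻¹ *ᵥ r) (D⁻¹ *ᵥ v - ((B * D⁻¹)ᵀ * S⁻¹) *ᵥ r) := by
    refine inv_mulVec_eq_vec ?_
    rw [fromBlocks_mulVec, hDt]
    congr 1
    · calc u = (S * S⁻¹) *ᵥ r + (B * D⁻¹) *ᵥ v := by
            rw [mul_nonsing_inv _ hS, one_mulVec, sub_add_cancel]
        _ = _ := by
            simp only [S, Sum.elim_comp_inl, Sum.elim_comp_inr, sub_mul, sub_mulVec, mulVec_sub,
              mulVec_mulVec, Matrix.mul_assoc]
            abel
    · simp only [Sum.elim_comp_inl, Sum.elim_comp_inr, mulVec_sub, mulVec_mulVec,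
        ← Matrix.mul_assoc, mul_nonsing_inv _ hD, Matrix.one_mul, one_mulVec]
      abel
  rw [hsol, sumElim_dotProduct_sumElim, dotProduct_sub, ← mulVec_mulVec, dotProduct_mulVec v (_)ᵀ,
    vecMul_transpose, sub_dotProduct]
  ring

end BlockMatrix

section QuadraticForm

variable {ι : Type*} [Fintype ι]

theorem Matrix.PosDef.exists_pos_mul_dotProduct_self_le {M : Matrix ι ι ℝ} (hM : M.PosDef) :
    ∃ c > 0, ∀ w : ι → ℝ, c * (w ⬝ᵥ w) ≤ w ⬝ᵥ M *ᵥ w := by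
  rcases isEmpty_or_nonempty ι with hι | hι
  · exact ⟨1, one_pos, fun w => by simp [Subsingleton.elim w 0]⟩
  set Q : EuclideanSpace ℝ ι → ℝ := fun v => v.ofLp ⬝ᵥ M *ᵥ v.ofLp
  have hQ : Continuous Q := by unfold Q; fun_prop
  have hQsmul (t : ℝ) (v : EuclideanSpace ℝ ι) : Q (t • v) = t ^ 2 * Q v := by
    simp only [Q, WithLp.ofLp_smul, mulVec_smul, smul_dotProduct, dotProduct_smul, smul_eq_mul]
    ring
  have hnorm (w : ι → ℝ) : ‖WithLp.toLp 2 w‖ ^ 2 = w ⬝ᵥ w := by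
    rw [EuclideanSpace.real_norm_sq_eq]
    simp [dotProduct, sq]
  obtain ⟨v₀, hv₀, hmin⟩ := (isCompact_sphere (0 : EuclideanSpace ℝ ι) 1).exists_isMinOn
    (NormedSpace.sphere_nonempty.2 zero_le_one) hQ.continuousOn
  refine ⟨Q v₀, hM.dotProduct_mulVec_pos fun h => ?_, fun w => ?_⟩
  · simp [(WithLp.ofLp_eq_zero 2).1 h] at hv₀
  obtain rfl | hw := eq_or_ne w 0
  · simp
  set v := WithLp.toLp 2 w
  have hv : ‖v‖ ≠ 0 := by simpa [v] using hw
  have hmem : ‖v‖⁻¹ • v ∈ Metric.sphere (0 : EuclideanSpace ℝ ι) 1 := by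
    simp [norm_smul, hv]
  have := hmin hmem
  simp only [Set.mem_ofPred_eq, hQsmul] at this
  calc Q v₀ * (w ⬝ᵥ w) = Q v₀ * ‖v‖ ^ 2 := by rw [hnorm]
    _ ≤ ‖v‖⁻¹ ^ 2 * Q v * ‖v‖ ^ 2 := by gcongr
    _ = w ⬝ᵥ M *ᵥ w := by field_simp; rfl

theorem integrable_one_add_abs_mul_exp_neg_mul_sq {c : ℝ} (hc : 0 < c) :
    Integrable fun t : ℝ => (1 + |t|) * exp (-c * t ^ 2) := by
  simp only [add_mul, one_mul]
  refine (integrable_exp_neg_mul_sq hc).add ((integrable_mul_exp_neg_mul_sq hc).norm.congr ?_)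
  filter_upwards with t
  simp [abs_of_pos (exp_pos _)]

theorem one_add_abs_le_prod_one_add_abs [DecidableEq ι] (x : ι → ℝ) (i : ι) :
    1 + |x i| ≤ ∏ j, (1 + |x j|) := by
  rw [← Finset.mul_prod_erase _ _ (Finset.mem_univ i)]
  exact le_mul_of_one_le_right (by positivity)
    (Finset.one_le_prod fun j _ => le_add_of_nonneg_right (abs_nonneg _))

theorem Matrix.PosDef.integrable_mul_exp_neg_quadratic {M : Matrix ι ι ℝ} (hM : M.PosDef)
    {f : (ι → ℝ) → ℝ} (hf : AEStronglyMeasurable f) {C : ℝ}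
    (hfC : ∀ x, |f x| ≤ C * ∏ j, (1 + |x j|)) :
    Integrable fun x => f x * exp (-(1 / 2) * (x ⬝ᵥ M *ᵥ x)) := by
  obtain ⟨c, hc, hcM⟩ := hM.exists_pos_mul_dotProduct_self_le
  have hG : Integrable fun x : ι → ℝ => ∏ j, (1 + |x j|) * exp (-(c / 2) * x j ^ 2) :=
    Integrable.fintype_prod (f := fun _ t => (1 + |t|) * exp (-(c / 2) * t ^ 2))
      fun _ => integrable_one_add_abs_mul_exp_neg_mul_sq (half_pos hc)
  refine (hG.const_mul C).mono' (hf.mul (by fun_prop)) (ae_of_all _ fun x => ?_)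
  calc ‖f x * exp (-(1 / 2) * (x ⬝ᵥ M *ᵥ x))‖
      = |f x| * exp (-(1 / 2) * (x ⬝ᵥ M *ᵥ x)) := by
        rw [norm_mul, norm_of_nonneg (exp_pos _).le, norm_eq_abs]
    _ ≤ C * (∏ j, (1 + |x j|)) * exp (-(c / 2) * (x ⬝ᵥ x)) := by
        gcongr ?_ * exp ?_
        · exact (abs_nonneg _).trans (hfC x)
        · exact hfC x
        · linarith [hcM x]
    _ = C * ∏ j, (1 + |x j|) * exp (-(c / 2) * x j ^ 2) := by
        rw [Finset.prod_mul_distrib, ← exp_sum, dotProduct, Finset.mul_sum, mul_assoc]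
        simp only [sq]

theorem integral_eval_sub_mul_exp_neg_quadratic (M : Matrix ι ι ℝ) (m : ι → ℝ) (a : ι) :
    ∫ y, (y a - m a) * exp (-(1 / 2) * ((y - m) ⬝ᵥ M *ᵥ (y - m))) = 0 := by
  set f : (ι → ℝ) → ℝ := fun y => y a * exp (-(1 / 2) * (y ⬝ᵥ M *ᵥ y))
  have hodd (y : ι → ℝ) : f (-y) = -f y := by
    simp only [f, Pi.neg_apply, mulVec_neg, dotProduct_neg, neg_dotProduct, neg_neg, neg_mul]
  have hsymm := integral_neg_eq_self f volume
  simp only [hodd, integral_neg] at hsymm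
  calc _ = ∫ y, f (y - m) := rfl
    _ = ∫ y, f y := integral_sub_right_eq_self f m
    _ = 0 := by linarith

end QuadraticForm

theorem integral_sumElim_eq_integral_integral {m n E : Type*} [Fintype m] [Fintype n]
    [NormedAddCommGroup E] [NormedSpace ℝ E] {f : (m ⊕ n → ℝ) → E} (hf : Integrable f) :
    ∫ z, f z = ∫ x : n → ℝ, ∫ y : m → ℝ, f (Sum.elim y x) := by
  have he := volume_measurePreserving_sumPiEquivProdPi_symm fun _ : m ⊕ n => ℝ
  have hemb := (MeasurableEquiv.sumPiEquivProdPi fun _ : m ⊕ n => ℝ).symm.measurableEmbedding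
  rw [← he.integral_comp hemb, Measure.volume_eq_prod]
  refine integral_prod_symm _ ?_
  rw [← Measure.volume_eq_prod]
  exact (he.integrable_comp_emb hemb).2 hf

theorem integrable_mulVec_sub_apply {α m n : Type*} [MeasurableSpace α] [Fintype n] {μ : Measure α}
    [IsFiniteMeasure μ] {X : α → n → ℝ} (hX : ∀ j, Integrable (fun x => X x j) μ)
    (M : Matrix m n ℝ) (c : n → ℝ) (a : m) :
    Integrable (fun x => (M *ᵥ (X x - c)) a) μ := by
  simp only [mulVec, dotProduct, Pi.sub_apply]
  exact integrable_finsetSum _ fun j _ => ((hX j).sub (integrable_const _)).const_mul _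

section MultivariateGaussian

variable {ι : Type*} [Fintype ι] [DecidableEq ι]

noncomputable def multivariateGaussianPDF (μ : ι → ℝ) (S : Matrix ι ι ℝ) (x : ι → ℝ) : ℝ :=
  √(((2 * π) ^ Fintype.card ι * S.det)⁻¹) * exp (-(1 / 2) * ((x - μ) ⬝ᵥ S⁻¹ *ᵥ (x - μ)))

variable {μ : ι → ℝ} {S : Matrix ι ι ℝ}

theorem multivariateGaussian_eq_withDensity :
    multivariateGaussian μ S =
      volume.withDensity fun x => ENNReal.ofReal (multivariateGaussianPDF μ S x) :=
  rfl

theorem multivariateGaussianPDF_nonneg (x : ι → ℝ) : 0 ≤ multivariateGaussianPDF μ S x := by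
  unfold multivariateGaussianPDF; positivity

theorem measurable_multivariateGaussianPDF : Measurable (multivariateGaussianPDF μ S) := by
  unfold multivariateGaussianPDF; fun_prop

theorem integrable_multivariateGaussian_iff {f : (ι → ℝ) → ℝ} :
    Integrable f (multivariateGaussian μ S) ↔
      Integrable fun x => multivariateGaussianPDF μ S x * f x := by
  rw [multivariateGaussian_eq_withDensity, integrable_withDensity_iff_integrable_smul'
    measurable_multivariateGaussianPDF.ennreal_ofReal (ae_of_all _ fun _ => ENNReal.ofReal_lt_top)]
  simp only [ENNReal.toReal_ofReal (multivariateGaussianPDF_nonneg _), smul_eq_mul]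

theorem integral_multivariateGaussian (f : (ι → ℝ) → ℝ) :
    ∫ x, f x ∂multivariateGaussian μ S = ∫ x, multivariateGaussianPDF μ S x * f x := by
  rw [multivariateGaussian_eq_withDensity, integral_withDensity_eq_integral_toReal_smul
    measurable_multivariateGaussianPDF.ennreal_ofReal (ae_of_all _ fun _ => ENNReal.ofReal_lt_top)]
  simp only [ENNReal.toReal_ofReal (multivariateGaussianPDF_nonneg _), smul_eq_mul]

theorem integrable_mul_multivariateGaussianPDF (hS : S.PosDef) {f : (ι → ℝ) → ℝ}
    (hf : AEStronglyMeasurable f) {C : ℝ} (hfC : ∀ x, |f x| ≤ C * ∏ j, (1 + |x j - μ j|)) :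
    Integrable fun x => multivariateGaussianPDF μ S x * f x := by
  have hfμ : AEStronglyMeasurable (fun x => f (x + μ)) :=
    hf.comp_measurePreserving (measurePreserving_add_right volume μ)
  refine (((hS.inv.integrable_mul_exp_neg_quadratic hfμ (C := C) fun x => by
    simpa using hfC (x + μ)).comp_sub_right μ).const_mul
    √(((2 * π) ^ Fintype.card ι * S.det)⁻¹)).congr (ae_of_all _ fun x => ?_)
  simp only [multivariateGaussianPDF, sub_add_cancel]
  ring

theorem isFiniteMeasure_multivariateGaussian (hS : S.PosDef) :
    IsFiniteMeasure (multivariateGaussian μ S) := by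
  have := integrable_mul_multivariateGaussianPDF (μ := μ) hS (f := 1) aestronglyMeasurable_const
    (C := 1) fun x => by
      simpa using Finset.one_le_prod fun j _ => le_add_of_nonneg_right (abs_nonneg (x j - μ j))
  rw [multivariateGaussian_eq_withDensity]
  simp only [Pi.one_apply, mul_one] at this
  exact isFiniteMeasure_withDensity_ofReal this.2

theorem integrable_eval_multivariateGaussian (hS : S.PosDef) (i : ι) :
    Integrable (fun x => x i) (multivariateGaussian μ S) := by
  refine integrable_multivariateGaussian_iff.2 (integrable_mul_multivariateGaussianPDF hS
    (measurable_pi_apply i).aestronglyMeasurable (C := 1 + |μ i|) fun x => ?_)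
  have := one_add_abs_le_prod_one_add_abs (x - μ) i
  simp only [Pi.sub_apply] at this
  calc |x i| ≤ |x i - μ i| + |μ i| := by simpa using abs_add_le (x i - μ i) (μ i)
    _ ≤ (1 + |μ i|) * (1 + |x i - μ i|) := by nlinarith [abs_nonneg (x i - μ i), abs_nonneg (μ i)]
    _ ≤ _ := by gcongr

end MultivariateGaussian

theorem integral_sub_condMean_mul_multivariateGaussian_fromBlocks
    {m n : Type*} [Fintype m] [Fintype n] [DecidableEq m] [DecidableEq n]
    {A : Matrix m m ℝ} {B : Matrix m n ℝ} {D : Matrix n n ℝ}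
    (hpos : (fromBlocks A B Bᵀ D).PosDef) (μ₁ : m → ℝ) (μ₂ : n → ℝ) (a : m)
    {ψ : (n → ℝ) → ℝ} (hψ : Measurable ψ) {C : ℝ} (hψC : ∀ x, |ψ x| ≤ C) :
    ∫ z, (z (Sum.inl a) - (μ₁ a + ((B * D⁻¹) *ᵥ (z ∘ Sum.inr - μ₂)) a)) * ψ (z ∘ Sum.inr)
      ∂multivariateGaussian (Sum.elim μ₁ μ₂) (fromBlocks A B Bᵀ D) = 0 := by
  have hD : D.PosDef := by simpa using hpos.toBlocks₂₂
  have hDs : Dᵀ = D := by simpa using hD.isHermitian.eq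
  have := isFiniteMeasure_multivariateGaussian (μ := Sum.elim μ₁ μ₂) hpos
  have hcoord := integrable_eval_multivariateGaussian (μ := Sum.elim μ₁ μ₂) hpos
  have hint : Integrable (fun z : m ⊕ n → ℝ =>
      (z (Sum.inl a) - (μ₁ a + ((B * D⁻¹) *ᵥ (z ∘ Sum.inr - μ₂)) a)) * ψ (z ∘ Sum.inr))
      (multivariateGaussian (Sum.elim μ₁ μ₂) (fromBlocks A B Bᵀ D)) :=
    ((hcoord _).sub ((integrable_const _).add
      (integrable_mulVec_sub_apply (fun j => hcoord (Sum.inr j)) _ _ a))).mul_bdd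
      (hψ.comp (by fun_prop)).aestronglyMeasurable (ae_of_all _ fun z => hψC _)
  rw [integral_multivariateGaussian,
    integral_sumElim_eq_integral_integral (integrable_multivariateGaussian_iff.1 hint)]
  refine integral_eq_zero_of_ae (ae_of_all _ fun x => ?_)
  set c := μ₁ + (B * D⁻¹) *ᵥ (x - μ₂)
  have hfactor (y : m → ℝ) :
      multivariateGaussianPDF (Sum.elim μ₁ μ₂) (fromBlocks A B Bᵀ D) (Sum.elim y x) *
        ((Sum.elim y x (Sum.inl a) - (μ₁ a + ((B * D⁻¹) *ᵥ (Sum.elim y x ∘ Sum.inr - μ₂)) a)) *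
          ψ (Sum.elim y x ∘ Sum.inr)) =
      (√(((2 * π) ^ Fintype.card (m ⊕ n) * (fromBlocks A B Bᵀ D).det)⁻¹) *
          exp (-(1 / 2) * ((x - μ₂) ⬝ᵥ D⁻¹ *ᵥ (x - μ₂))) * ψ x) *
        ((y a - c a) * exp (-(1 / 2) * ((y - c) ⬝ᵥ (A - B * D⁻¹ * Bᵀ)⁻¹ *ᵥ (y - c)))) := by
    have hsub : Sum.elim y x - Sum.elim μ₁ μ₂ = Sum.elim (y - μ₁) (x - μ₂) := by
      ext (i | j) <;> rfl
    have hyc : y - μ₁ - (B * D⁻¹) *ᵥ (x - μ₂) = y - c := by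
      simp only [c, sub_sub]
    simp only [multivariateGaussianPDF, hsub, sumElim_dotProduct_inv_fromBlocks_mulVec
      hpos.det_pos.ne'.isUnit hD.det_pos.ne'.isUnit hDs, hyc, mul_add, exp_add]
    simp only [c, Sum.elim_inl, Sum.elim_comp_inr, Pi.add_apply]
    ring
  simp only [hfactor, integral_const_mul, integral_eval_sub_mul_exp_neg_quadratic, mul_zero,
    Pi.zero_apply]

theorem condExp_comap_ae_eq_of_forall_integral_mul_indicator {Ω β : Type*} {mΩ : MeasurableSpace Ω}
    [mβ : MeasurableSpace β] {P : Measure Ω} [IsFiniteMeasure P] {X : Ω → β} (hX : Measurable X)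
    {Y : Ω → ℝ} (hY : Integrable Y P) {g : β → ℝ} (hg : Measurable g)
    (hgX : Integrable (fun ω => g (X ω)) P)
    (h : ∀ s, MeasurableSet s → ∫ ω, (Y ω - g (X ω)) * s.indicator 1 (X ω) ∂P = 0) :
    P[Y | mβ.comap X] =ᵐ[P] fun ω => g (X ω) := by
  refine (ae_eq_condExp_of_forall_setIntegral_eq hX.comap_le hY (fun _ _ _ => hgX.integrableOn)
    ?_ (hg.comp (comap_measurable X)).aestronglyMeasurable).symm
  rintro _ ⟨s, hs, rfl⟩ -
  have hind (f : Ω → ℝ) : ∫ ω in X ⁻¹' s, f ω ∂P = ∫ ω, f ω * s.indicator 1 (X ω) ∂P := by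
    rw [← integral_indicator (hX hs)]
    congr 1 with ω
    by_cases hω : X ω ∈ s <;> simp [hω]
  have := (hind _).trans (h s hs)
  rw [integral_sub hY.integrableOn hgX.integrableOn] at this
  linarith

/-- If `(ξ, X)` is jointly Gaussian with mean `(μ_ξ, μ_X)` and positive
definite covariance matrix with blocks `Σ_ξ, Σ_{ξX}, Σ_{Xξ}, Σ_X`, then for each
coordinate `a`, `E[ξ_a | σ(X)] = μ_{ξ,a} + (Σ_{ξX} Σ_X⁻¹ (X − μ_X))_a` a.s. -/
theorem condexp_gaussian_linear {Ω : Type*} {ℱ : MeasurableSpace Ω} (P : Measure Ω)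
    [IsProbabilityMeasure P] {q h : ℕ}
    (ξ : Ω → Fin q → ℝ) (X : Ω → Fin h → ℝ) (hξ : Measurable ξ) (hX : Measurable X)
    (μξ : Fin q → ℝ) (μX : Fin h → ℝ)
    (Sξ : Matrix (Fin q) (Fin q) ℝ) (SξX : Matrix (Fin q) (Fin h) ℝ)
    (SXξ : Matrix (Fin h) (Fin q) ℝ) (SX : Matrix (Fin h) (Fin h) ℝ)
    (hT : SXξ = SξXᵀ)
    (hpos : (Matrix.fromBlocks Sξ SξX SXξ SX).PosDef)
    (hlaw : P.map (fun ω => Sum.elim (ξ ω) (X ω)) =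
      multivariateGaussian (Sum.elim μξ μX) (Matrix.fromBlocks Sξ SξX SXξ SX)) :
    ∀ a : Fin q,
      P[fun ω => ξ ω a | MeasurableSpace.comap X inferInstance] =ᵐ[P]
        fun ω => μξ a + ((SξX * SX⁻¹) *ᵥ (X ω - μX)) a := by
  subst hT
  intro a
  have hZ : Measurable fun ω => Sum.elim (ξ ω) (X ω) := measurable_pi_iff.2 fun
    | .inl i => (measurable_pi_apply i).comp hξ
    | .inr j => (measurable_pi_apply j).comp hX
  have hcoord (i : Fin q ⊕ Fin h) : Integrable (fun ω => Sum.elim (ξ ω) (X ω) i) P :=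
    (integrable_map_measure (measurable_pi_apply i).aestronglyMeasurable hZ.aemeasurable).1
      (hlaw ▸ integrable_eval_multivariateGaussian hpos i)
  refine condExp_comap_ae_eq_of_forall_integral_mul_indicator hX (hcoord (.inl a))
    (g := fun x => μξ a + ((SξX * SX⁻¹) *ᵥ (x - μX)) a) (by fun_prop) ((integrable_const _).add
      (integrable_mulVec_sub_apply (fun j => hcoord (.inr j)) _ _ a)) fun s hs => ?_
  have hψ : Measurable (s.indicator (1 : (Fin h → ℝ) → ℝ)) := measurable_one.indicator hs
  have key := integral_sub_condMean_mul_multivariateGaussian_fromBlocks hpos μξ μX a hψ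
    (C := 1) fun x => by by_cases hx : x ∈ s <;> simp [hx]
  rwa [← hlaw, integral_map hZ.aemeasurable (Measurable.aestronglyMeasurable (by fun_prop))] at key
end
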